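/- Let F be a Kaplansky field of characteristic 2 (there exists a unique F-quaternion division algebra up to isomorphism). Then every quadratic form over F of type (4,1) — that is, every 5-dimensional quadratic form over F whose nonsingular part has dimension 4 and whose totally singular part has dimension 1 — is isotropic. -/

import Mathlib

noncomputable section GenQuadForm

open scoped TensorProduct

/-- An `F`-linear involution (of the first kind) on the `F`-algebra `D`. -/
def IsFInvolution (F : Type*) {D : Type*} [Field F] [Ring D] [Algebra F D]
    (θ : D → D) : Prop :=
  (∀ a b : D, θ (a + b) = θ a + θ b) ∧
  (∀ (c : F) (a : D), θ (c • a) = c • θ a) ∧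
  (∀ a b : D, θ (a * b) = θ b * θ a) ∧
  (∀ a : D, θ (θ a) = a)

/-- `Sym(D,θ)`, the set of symmetric elements. -/
def SymSet {D : Type*} (θ : D → D) : Set D := {a | θ a = a}

/-- `Alt(D,θ) = {a - θ a | a ∈ D}`, the set of alternating elements. -/
def AltSet {D : Type*} [Ring D] (θ : D → D) : Set D := {a | ∃ b : D, a = b - θ b}

/-- The right scalar multiple of a vector `x ∈ Dⁿ` by `d ∈ D`. -/
def rsmul {D : Type*} [Ring D] {n : ℕ} (x : Fin n → D) (d : D) : Fin n → D :=
  fun i => x i * d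

/-- `h` is a hermitian form on the (right) `D`-vector space `Dⁿ` with respect to the
involution `θ`: bi-additive, sesquilinear and `θ`-symmetric. (Every `n`-dimensional right
`D`-vector space is isomorphic to `Dⁿ`.) -/
def IsHermForm {D : Type*} [Ring D] (θ : D → D) (n : ℕ)
    (h : (Fin n → D) → (Fin n → D) → D) : Prop :=
  (∀ x x' y : Fin n → D, h (x + x') y = h x y + h x' y) ∧
  (∀ x y y' : Fin n → D, h x (y + y') = h x y + h x y') ∧
  (∀ (x y : Fin n → D) (d₁ d₂ : D), h (rsmul x d₁) (rsmul y d₂) = θ d₁ * h x y * d₂) ∧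
  (∀ x y : Fin n → D, h y x = θ (h x y))

/-- A hermitian form is anisotropic if `h x x = 0` only for `x = 0`. -/
def HermAnisotropic {D : Type*} [Ring D] (n : ℕ)
    (h : (Fin n → D) → (Fin n → D) → D) : Prop :=
  ∀ x : Fin n → D, h x x = 0 → x = 0

/-- A hermitian form is alternating if `h x x ∈ Alt(D,θ)` for all `x`. -/
def HermAlternating {D : Type*} [Ring D] (θ : D → D) (n : ℕ)
    (h : (Fin n → D) → (Fin n → D) → D) : Prop :=
  ∀ x : Fin n → D, h x x ∈ AltSet θ

/-- A hermitian form is direct if `h x x ∉ Alt(D,θ)` for all `x ≠ 0`. -/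
def HermDirect {D : Type*} [Ring D] (θ : D → D) (n : ℕ)
    (h : (Fin n → D) → (Fin n → D) → D) : Prop :=
  ∀ x : Fin n → D, x ≠ 0 → h x x ∉ AltSet θ

/-- A hermitian form is nondegenerate if its radical is trivial. -/
def HermNondegenerate {D : Type*} [Ring D] (n : ℕ)
    (h : (Fin n → D) → (Fin n → D) → D) : Prop :=
  ∀ x : Fin n → D, (∀ y : Fin n → D, h x y = 0) → x = 0

/-- The diagonal hermitian form `⟨a₁,…,aₙ⟩ʰ` over `(D,θ)`. -/
def diagHerm {D : Type*} [Ring D] (θ : D → D) {n : ℕ} (a : Fin n → D) :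
    (Fin n → D) → (Fin n → D) → D :=
  fun x y => ∑ i, θ (x i) * a i * y i

/-- `q` (a representative function of a map `Dⁿ → D/Alt(D,θ)`) is a generalised quadratic form
over `(D,θ)` with polar form `h`: all defining identities are required modulo `Alt(D,θ)`. -/
def IsQuadForm {D : Type*} [Ring D] (θ : D → D) (n : ℕ)
    (q : (Fin n → D) → D) (h : (Fin n → D) → (Fin n → D) → D) : Prop :=
  IsHermForm θ n h ∧
  (∀ (x : Fin n → D) (d : D), q (rsmul x d) - θ d * q x * d ∈ AltSet θ) ∧
  (∀ x y : Fin n → D, q (x + y) - q x - q y - h x y ∈ AltSet θ)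

/-- A quadratic form over `(D,θ)` is isotropic if it vanishes modulo `Alt(D,θ)` at some
nonzero vector. -/
def QuadIsotropic {D : Type*} [Ring D] (θ : D → D) (n : ℕ)
    (q : (Fin n → D) → D) : Prop :=
  ∃ x : Fin n → D, x ≠ 0 ∧ q x ∈ AltSet θ

/-- A quadratic form over `(D,θ)` is anisotropic if it is not isotropic. -/
def QuadAnisotropic {D : Type*} [Ring D] (θ : D → D) (n : ℕ)
    (q : (Fin n → D) → D) : Prop :=
  ∀ x : Fin n → D, x ≠ 0 → q x ∉ AltSet θ

/-- A quadratic form over `(D,θ)` represents `a ∈ D` if its value at some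
nonzero vector is `a + Alt(D,θ)`. -/
def QuadRepresents {D : Type*} [Ring D] (θ : D → D) (n : ℕ)
    (q : (Fin n → D) → D) (a : D) : Prop :=
  ∃ x : Fin n → D, x ≠ 0 ∧ q x - a ∈ AltSet θ

/-- A quadratic form over `(D,θ)` is totally singular if its polar form is identically zero. -/
def QuadTotallySingular {D : Type*} [Ring D] (θ : D → D) (n : ℕ)
    (q : (Fin n → D) → D) : Prop :=
  IsQuadForm θ n q (fun _ _ => 0)

/-- A quadratic form over `(D,θ)` is nonsingular if its polar form is nondegenerate. -/
def QuadNonsingular {D : Type*} [Ring D] (θ : D → D) (n : ℕ)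
    (q : (Fin n → D) → D) : Prop :=
  ∃ h, IsQuadForm θ n q h ∧ HermNondegenerate n h

/-- The diagonal quadratic form `⟨a₁,…,aₙ⟩` over `(D,θ)`. -/
def diagQuad {D : Type*} [Ring D] (θ : D → D) {n : ℕ} (a : Fin n → D) :
    (Fin n → D) → D :=
  fun x => ∑ i, θ (x i) * a i * x i

/-- `u⁺(D)`: the supremum of the dimensions of anisotropic hermitian forms over `(D,θ)`. -/
def uHermPlus {D : Type*} [DivisionRing D] (θ : D → D) : ℕ∞ :=
  ⨆ n ∈ {n : ℕ | ∃ h, IsHermForm θ n h ∧ HermAnisotropic n h}, (n : ℕ∞)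

/-- `u⁺_d(D)`: the supremum of the dimensions of direct hermitian forms over `(D,θ)`. -/
def uHermPlusDirect {D : Type*} [DivisionRing D] (θ : D → D) : ℕ∞ :=
  ⨆ n ∈ {n : ℕ | ∃ h, IsHermForm θ n h ∧ HermDirect θ n h}, (n : ℕ∞)

/-- `u⁻(D)`: the supremum of the dimensions of anisotropic alternating hermitian forms
over `(D,θ)`. -/
def uHermMinus {D : Type*} [DivisionRing D] (θ : D → D) : ℕ∞ :=
  ⨆ n ∈ {n : ℕ | ∃ h, IsHermForm θ n h ∧ HermAnisotropic n h ∧ HermAlternating θ n h},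
    (n : ℕ∞)

/-- `u(D)`: the supremum of the dimensions of anisotropic (generalised) quadratic forms
over `(D,θ)`. -/
def uQuad {D : Type*} [DivisionRing D] (θ : D → D) : ℕ∞ :=
  ⨆ n ∈ {n : ℕ | ∃ q h, IsQuadForm θ n q h ∧ QuadAnisotropic θ n q}, (n : ℕ∞)

/-- `ũ(D)`: the supremum of the dimensions of anisotropic nonsingular quadratic forms
over `(D,θ)`. -/
def uQuadTilde {D : Type*} [DivisionRing D] (θ : D → D) : ℕ∞ :=
  ⨆ n ∈ {n : ℕ | ∃ q, QuadNonsingular θ n q ∧ QuadAnisotropic θ n q}, (n : ℕ∞)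

/-- The polar form of a quadratic form over a field. -/
def polarF {F : Type*} [Field F] {n : ℕ} (q : (Fin n → F) → F) :
    (Fin n → F) → (Fin n → F) → F :=
  fun x y => q (x + y) - q x - q y

/-- A quadratic form over the field `F` (on `Fⁿ`): `q (a • x) = a² q x` and the polar
form is bilinear. -/
def IsQuadFormField {F : Type*} [Field F] (n : ℕ) (q : (Fin n → F) → F) : Prop :=
  (∀ (a : F) (x : Fin n → F), q (a • x) = a ^ 2 * q x) ∧
  (∀ x x' y : Fin n → F, polarF q (x + x') y = polarF q x y + polarF q x' y) ∧
  (∀ (a : F) (x y : Fin n → F), polarF q (a • x) y = a * polarF q x y)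

def QFieldNonsingular {F : Type*} [Field F] (n : ℕ) (q : (Fin n → F) → F) : Prop :=
  ∀ x : Fin n → F, (∀ y : Fin n → F, polarF q x y = 0) → x = 0

def QFieldTotallySingular {F : Type*} [Field F] (n : ℕ) (q : (Fin n → F) → F) : Prop :=
  ∀ x y : Fin n → F, q (x + y) = q x + q y

def QFieldAnisotropic {F : Type*} [Field F] (n : ℕ) (q : (Fin n → F) → F) : Prop :=
  ∀ x : Fin n → F, q x = 0 → x = 0

/-- `ũ(F)`: the supremum of the dimensions of anisotropic nonsingular quadratic forms
over the field `F`. -/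
def uTildeField (F : Type*) [Field F] : ℕ∞ :=
  ⨆ n ∈ {n : ℕ | ∃ q : (Fin n → F) → F,
      IsQuadFormField n q ∧ QFieldNonsingular n q ∧ QFieldAnisotropic n q}, (n : ℕ∞)

/-- The subfield `F² = {a² : a ∈ F}` of a field of characteristic `2`. -/
def sqSubfield (F : Type*) [Field F] [CharP F 2] : Subfield F :=
  (frobenius F 2).fieldRange

/-- `[F : F²]` as an element of `ℕ ∪ {∞}`. -/
def sqIndex (F : Type*) [Field F] [CharP F 2] : ℕ∞ :=
  Cardinal.toENat (Module.rank (sqSubfield F) F)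

/-- `℘(F) = {a² + a : a ∈ F}`. -/
def wpSet (F : Type*) [Field F] : Set F := {a | ∃ b : F, a = b ^ 2 + b}

/-!
Write `[β, γ)` for the quaternion algebra `ℍ[F,β,1,γ]` (`i² = i + β`, `j² = γ`, `ji = (1 - i)j`).
Suppose `q = q₁ ⊥ ⟨c⟩` is anisotropic. In characteristic `2` the polar form of `q₁` is
alternating and nondegenerate, so `q₁ ≅ [a, b] ⊥ [a', b']` for orthogonal hyperbolic pairs
`(e, f)` and `(e', f')`. The algebra `[ab, ca)` is a division algebra: by multiplicativity of the
norm of `F[i]` it suffices that `[1, ab] ⊥ ⟨ca⟩` is anisotropic, and `a · ([1, ab] ⊥ ⟨ca⟩)` is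
the subform `[a, b] ⊥ ⟨c⟩` of `q`. Likewise `[a'b', ca')` is a division algebra. Over a
Kaplansky field the two are isomorphic, so `ca` is a square in `[a'b', ca')`, which forces
`ca = x² + ca'(z² + zw + a'b'w²)`. Then `c e + cz e' + a'cw f'`, together with the coordinate
`x` of `⟨c⟩`, is an isotropic vector of `q`.
-/

open Quaternion

namespace QuaternionAlgebra

variable {F : Type*} [Field F] {c₁ c₂ c₃ : F}

theorem re_star_mul_self (a : ℍ[F,c₁,c₂,c₃]) :
    (star a * a).re = a.re ^ 2 + c₂ * a.re * a.imI - c₁ * a.imI ^ 2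
      - c₃ * (a.imJ ^ 2 + c₂ * a.imJ * a.imK - c₁ * a.imK ^ 2) := by
  simp only [re_mul, re_star, imI_star, imJ_star, imK_star]
  ring

/-- The reduced norm restricted to `F ⊕ F i ⊕ F j`, that is
`p + r i + t j ↦ p ^ 2 + c₂ p r - c₁ r ^ 2 - c₃ t ^ 2`, is anisotropic. -/
def NormAnisotropicOnOneIJ (c₁ c₂ c₃ : F) : Prop :=
  ∀ p r t : F, p ^ 2 + c₂ * p * r - c₁ * r ^ 2 = c₃ * t ^ 2 → p = 0 ∧ r = 0 ∧ t = 0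

theorem re_star_mul_self_ne_zero (h : NormAnisotropicOnOneIJ c₁ c₂ c₃) {a : ℍ[F,c₁,c₂,c₃]}
    (ha : a ≠ 0) : (star a * a).re ≠ 0 := by
  rw [re_star_mul_self]
  intro h0
  set u := a.imJ ^ 2 + c₂ * a.imJ * a.imK - c₁ * a.imK ^ 2
  by_cases hu : u = 0
  · obtain ⟨hz, hw, -⟩ := h a.imJ a.imK 0 (by linear_combination hu)
    obtain ⟨hx, hy, -⟩ := h a.re a.imI 0 (by linear_combination h0 + c₃ * hu)
    exact ha (QuaternionAlgebra.ext hx hy hz hw)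
  · -- `(a.re + a.imI i) (a.imJ + a.imK i) ∈ F[i]` has norm `c₃ u ^ 2`
    refine hu (h (a.re * a.imJ + c₁ * a.imI * a.imK)
      (a.re * a.imK + a.imI * a.imJ + c₂ * a.imI * a.imK) u ?_).2.2
    linear_combination u * h0

noncomputable abbrev divisionRingOfNormAnisotropic (h : NormAnisotropicOnOneIJ c₁ c₂ c₃) :
    DivisionRing ℍ[F,c₁,c₂,c₃] :=
  DivisionRing.ofIsUnitOrEqZero fun a => or_iff_not_imp_right.2 fun ha => by
    set n := (star a * a).re
    have hn : n ≠ 0 := re_star_mul_self_ne_zero h ha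
    have hl : star a * a = n := star_mul_eq_coe a
    have hr : a * star a = n := star_comm_self' a ▸ hl
    refine ⟨⟨a, n⁻¹ • star a, ?_, ?_⟩, rfl⟩
    · rw [mul_smul_comm, hr, smul_coe, inv_mul_cancel₀ hn, coe_one]
    · rw [smul_mul_assoc, hl, smul_coe, inv_mul_cancel₀ hn, coe_one]

/-- `c₂ ^ 2 + 4 c₁` is the discriminant of `X ^ 2 - c₂ X - c₁`, the minimal polynomial of `i`. -/
theorem isCentral_of_discr_ne_zero (h : c₂ ^ 2 + 4 * c₁ ≠ 0) :
    Algebra.IsCentral F ℍ[F,c₁,c₂,c₃] := by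
  refine ⟨fun a ha => ?_⟩
  rw [Subalgebra.mem_center_iff] at ha
  have hi := congrArg (fun b => (b.imJ, b.imK)) (ha ⟨0, 1, 0, 0⟩)
  have hj := congrArg (fun b => (b.imJ, b.imK)) (ha ⟨0, 0, 1, 0⟩)
  simp only [imJ_mul, imK_mul, Prod.mk.injEq, mul_zero, zero_mul, mul_one, one_mul,
    add_zero, zero_add, sub_zero, zero_sub] at hi hj
  have hK : a.imK = 0 :=
    (mul_eq_zero.1 (by linear_combination c₂ * hi.2 + 2 * hi.1)).resolve_left h
  have hJ : a.imJ = 0 :=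
    (mul_eq_zero.1 (by linear_combination 2 * c₁ * hi.2 - c₂ * hi.1)).resolve_left h
  have hI : a.imI = 0 :=
    (mul_eq_zero.1 (by linear_combination c₂ * hj.1 - 2 * c₁ * hj.2)).resolve_left h
  exact Algebra.mem_bot.2 ⟨a.re, QuaternionAlgebra.ext rfl hI.symm hJ.symm hK.symm⟩

theorem re_sq_add_eq_of_mul_self_eq_coe [CharP F 2] (hc₂ : c₂ ≠ 0) {a : ℍ[F,c₁,c₂,c₃]}
    {d : F} (h : a * a = d) :
    d = a.re ^ 2 + c₃ * (a.imJ ^ 2 + c₂ * a.imJ * a.imK - c₁ * a.imK ^ 2) := by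
  have h2 : (2 : F) = 0 := CharTwo.two_eq_zero
  have hI := congrArg imI h
  have hR := congrArg re h
  simp only [re_mul, imI_mul, re_coe, imI_coe] at hI hR
  have hy : a.imI = 0 := by
    have : c₂ * a.imI ^ 2 = 0 := by linear_combination hI - a.re * a.imI * h2
    simpa [hc₂] using this
  rw [← hR, hy]
  ring

theorem exists_eq_sq_add_of_algEquiv [CharP F 2] {c₁' c₂' c₃' : F} (hc₂' : c₂' ≠ 0)
    (ψ : ℍ[F,c₁,c₂,c₃] ≃ₐ[F] ℍ[F,c₁',c₂',c₃']) :
    ∃ x z w : F, c₃ = x ^ 2 + c₃' * (z ^ 2 + c₂' * z * w - c₁' * w ^ 2) := by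
  let j : ℍ[F,c₁,c₂,c₃] := ⟨0, 0, 1, 0⟩
  have hj : j * j = algebraMap F _ c₃ := by ext <;> simp [j]
  have hψj : ψ j * ψ j = c₃ := by rw [← map_mul ψ j j, hj, AlgEquiv.commutes, coe_algebraMap]
  exact ⟨_, _, _, re_sq_add_eq_of_mul_self_eq_coe hc₂' hψj⟩

end QuaternionAlgebra

namespace QuadraticMap

variable {F V : Type*} [Field F] [AddCommGroup V] [Module F V] (Q : QuadraticForm F V)

theorem map_smul_add_smul_of_polar_eq_one {e f : V} (hef : polar Q e f = 1) (x y : F) :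
    Q (x • e + y • f) = x ^ 2 * Q e + x * y + y ^ 2 * Q f := by
  rw [QuadraticMap.map_add Q, QuadraticMap.map_smul, QuadraticMap.map_smul, polar_smul_left,
    polar_smul_right, hef, smul_eq_mul, smul_eq_mul, smul_eq_mul, smul_eq_mul]
  ring

theorem exists_polar_eq_one (hQ : (polarBilin Q).SeparatingLeft) {e : V} (he : e ≠ 0) :
    ∃ f, polar Q e f = 1 := by
  obtain ⟨g, hg⟩ : ∃ g, polar Q e g ≠ 0 := by
    by_contra! h
    exact he (hQ e h)
  exact ⟨(polar Q e g)⁻¹ • g, by rw [polar_smul_right, smul_eq_mul, inv_mul_cancel₀ hg]⟩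

theorem exists_ne_zero_polar_eq_zero [FiniteDimensional F V] (hV : 2 < Module.finrank F V)
    (e f : V) : ∃ v ≠ 0, polar Q e v = 0 ∧ polar Q f v = 0 := by
  have hker := LinearMap.ker_ne_bot_of_finrank_lt
    (f := (polarBilin Q e).prod (polarBilin Q f)) (by simpa using hV)
  obtain ⟨v, hv, hv0⟩ := Submodule.exists_mem_ne_zero_of_ne_bot hker
  simp only [LinearMap.mem_ker, LinearMap.prod_apply, Function.prod, Prod.mk_eq_zero,
    polarBilin_apply_apply] at hv
  exact ⟨v, hv0, hv⟩

variable [CharP F 2]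

theorem polar_self_eq_zero (x : V) : polar Q x x = 0 := by
  rw [polar_self, two_smul, CharTwo.add_self_eq_zero]

theorem exists_orthogonal_polar_eq_one [FiniteDimensional F V]
    (hQ : (polarBilin Q).SeparatingLeft) (hV : 2 < Module.finrank F V) {e f : V}
    (hef : polar Q e f = 1) :
    ∃ e' f', polar Q e' f' = 1 ∧ polar Q e e' = 0 ∧ polar Q f e' = 0 ∧
      polar Q e f' = 0 ∧ polar Q f f' = 0 := by
  obtain ⟨e', he', hee', hfe'⟩ := exists_ne_zero_polar_eq_zero Q hV e f
  obtain ⟨g, hg⟩ := exists_polar_eq_one Q hQ he'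
  have hfe : polar Q f e = 1 := by rw [polar_comm, hef]
  -- `f'` is the projection of `g` onto the orthogonal complement of the plane `⟨e, f⟩`
  refine ⟨e', g + polar Q f g • e + polar Q e g • f, ?_, hee', hfe', ?_, ?_⟩
  · simp only [polar_add_right, polar_smul_right, polar_comm Q e' e, polar_comm Q e' f, hee',
      hfe', hg, smul_zero, add_zero]
  · simp only [polar_add_right, polar_smul_right, polar_self_eq_zero, hef, smul_eq_mul]
    rw [mul_zero, mul_one, add_zero, CharTwo.add_self_eq_zero]
  · simp only [polar_add_right, polar_smul_right, polar_self_eq_zero, hfe, smul_eq_mul]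
    rw [mul_zero, mul_one, add_zero, CharTwo.add_self_eq_zero]

variable {c : F}

theorem normAnisotropicOnOneIJ_of_polar_eq_one
    (hQc : ∀ v t, Q v + c * t ^ 2 = 0 → v = 0 ∧ t = 0) {e f : V} (hef : polar Q e f = 1) :
    QuaternionAlgebra.NormAnisotropicOnOneIJ (Q e * Q f) 1 (c * Q e) := by
  intro p r t h
  have h2 : (2 : F) = 0 := CharTwo.two_eq_zero
  have he : Q e ≠ 0 := by
    intro h0
    obtain ⟨rfl, -⟩ := hQc e 0 (by simp [h0])
    simp at hef
  -- `p ^ 2 + p r + Q e Q f r ^ 2 = Q e · Q ((p / Q e) • e + r • f)`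
  obtain ⟨hv, rfl⟩ := hQc ((p / Q e) • e + r • f) t (by
    rw [map_smul_add_smul_of_polar_eq_one Q hef]
    field_simp
    linear_combination h + (Q e * Q f * r ^ 2 + c * Q e * t ^ 2) * h2)
  have hp := congrArg (polar Q · f) hv
  have hr := congrArg (polar Q e) hv
  simp only [polar_add_left, polar_add_right, polar_smul_left, polar_smul_right,
    polar_self_eq_zero, hef, polar_zero_left, polar_zero_right, smul_eq_mul, mul_zero, mul_one,
    add_zero, zero_add] at hp hr
  exact ⟨(div_eq_zero_iff.1 hp).resolve_right he, hr, rfl⟩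

theorem isEmpty_algEquiv_of_orthogonal_polar_eq_one
    (hQc : ∀ v t, Q v + c * t ^ 2 = 0 → v = 0 ∧ t = 0) {e₁ f₁ e₂ f₂ : V}
    (h₁ : polar Q e₁ f₁ = 1) (h₂ : polar Q e₂ f₂ = 1)
    (he₁e₂ : polar Q e₁ e₂ = 0) (he₁f₂ : polar Q e₁ f₂ = 0)
    (hf₁e₂ : polar Q f₁ e₂ = 0) (hf₁f₂ : polar Q f₁ f₂ = 0) :
    IsEmpty (ℍ[F, Q e₁ * Q f₁, 1, c * Q e₁] ≃ₐ[F] ℍ[F, Q e₂ * Q f₂, 1, c * Q e₂]) := by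
  refine ⟨fun ψ => ?_⟩
  have h2 : (2 : F) = 0 := CharTwo.two_eq_zero
  have hc : c ≠ 0 := fun hc => one_ne_zero (hQc 0 1 (by simp [hc])).2
  obtain ⟨x, z, w, hN⟩ := QuaternionAlgebra.exists_eq_sq_add_of_algEquiv one_ne_zero ψ
  set v := c • e₁ + ((c * z) • e₂ + (c * Q e₂ * w) • f₂)
  have hv : Q v + c * x ^ 2 = 0 := by
    rw [QuadraticMap.map_add Q, QuadraticMap.map_smul, map_smul_add_smul_of_polar_eq_one Q h₂,
      polar_smul_left, polar_add_right, polar_smul_right, polar_smul_right, he₁e₂, he₁f₂]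
    simp only [smul_eq_mul]
    linear_combination c * hN + (c * x ^ 2 + c ^ 2 * Q e₂ * (z * w + z ^ 2)) * h2
  have hvf₁ := congrArg (polar Q · f₁) (hQc v x hv).1
  simp only [v, polar_add_left, polar_smul_left, h₁, polar_comm Q e₂ f₁, polar_comm Q f₂ f₁,
    hf₁e₂, hf₁f₂, polar_zero_left, smul_eq_mul] at hvf₁
  exact hc (by simpa using hvf₁)

end QuadraticMap

def IsQuadFormField.toQuadraticForm {F : Type*} [Field F] {n : ℕ} {q : (Fin n → F) → F}
    (hq : IsQuadFormField n q) : QuadraticForm F (Fin n → F) :=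
  QuadraticMap.ofPolar q (fun a x => by rw [hq.1, smul_eq_mul, sq]) hq.2.1 hq.2.2

theorem stmt15_general {F : Type u} [Field F] [CharP F 2]
    (Q : Type u) [DivisionRing Q] [Algebra F Q]
    (huniq : ∀ (Q' : Type u) [DivisionRing Q'] [Algebra F Q'],
      Algebra.IsCentral F Q' → Module.finrank F Q' = 4 → Nonempty (Q' ≃ₐ[F] Q))
    (q : (Fin 5 → F) → F)
    (q₁ : (Fin 4 → F) → F) (q₂ : (Fin 1 → F) → F)
    (hq₁ : IsQuadFormField 4 q₁) (hq₁ns : QFieldNonsingular 4 q₁)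
    (hq₂ : IsQuadFormField 1 q₂)
    (f : (Fin 5 → F) ≃ₗ[F] (Fin 4 → F) × (Fin 1 → F))
    (hdecomp : ∀ x : Fin 5 → F, q x = q₁ (f x).1 + q₂ (f x).2) :
    ∃ x : Fin 5 → F, x ≠ 0 ∧ q x = 0 := by
  by_contra! hani
  set φ₁ := hq₁.toQuadraticForm
  have hq₁c : ∀ v t, φ₁ v + q₂ 1 * t ^ 2 = 0 → v = 0 ∧ t = 0 := by
    intro v t hvt
    have h0 : f.symm (v, t • 1) = 0 := by
      by_contra hne
      refine hani _ hne ?_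
      rw [hdecomp, f.apply_symm_apply, hq₂.1, ← hvt, mul_comm]
      rfl
    simpa [Prod.ext_iff] using h0
  have hdiscr (β : F) : (1 : F) ^ 2 + 4 * β ≠ 0 := by
    rw [show (1 : F) ^ 2 + 4 * β = 1 by linear_combination 2 * β * CharTwo.two_eq_zero (R := F)]
    exact one_ne_zero
  have hiso {e f} (hef : QuadraticMap.polar φ₁ e f = 1) :
      Nonempty (ℍ[F, φ₁ e * φ₁ f, 1, q₂ 1 * φ₁ e] ≃ₐ[F] Q) :=
    letI := QuaternionAlgebra.divisionRingOfNormAnisotropic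
      (QuadraticMap.normAnisotropicOnOneIJ_of_polar_eq_one φ₁ hq₁c hef)
    huniq _ (QuaternionAlgebra.isCentral_of_discr_ne_zero (hdiscr _))
      (QuaternionAlgebra.finrank_eq_four ..)
  obtain ⟨e₁, he₁⟩ := exists_ne (0 : Fin 4 → F)
  obtain ⟨f₁, h₁⟩ := QuadraticMap.exists_polar_eq_one φ₁ hq₁ns he₁
  obtain ⟨e₂, f₂, h₂, he₁e₂, hf₁e₂, he₁f₂, hf₁f₂⟩ :=
    QuadraticMap.exists_orthogonal_polar_eq_one φ₁ hq₁ns (by simp) h₁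
  obtain ⟨ψ₁⟩ := hiso h₁
  obtain ⟨ψ₂⟩ := hiso h₂
  exact (QuadraticMap.isEmpty_algEquiv_of_orthogonal_polar_eq_one φ₁ hq₁c h₁ h₂ he₁e₂ he₁f₂ hf₁e₂
    hf₁f₂).false (ψ₁.trans ψ₂.symm)

/-- Let `F` be a Kaplansky field of characteristic 2 (there is a unique
`F`-quaternion division algebra `Q` up to isomorphism). Then every quadratic form over `F`
of type `(4,1)` — a 5-dimensional form decomposing as the orthogonal sum of a
4-dimensional nonsingular form and a 1-dimensional totally singular form — is isotropic. -/
theorem stmt15 {F : Type u} [Field F] [CharP F 2]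
    (Q : Type u) [DivisionRing Q] [Algebra F Q] [Algebra.IsCentral F Q]
    (hQ4 : Module.finrank F Q = 4)
    (huniq : ∀ (Q' : Type u) [DivisionRing Q'] [Algebra F Q'],
      Algebra.IsCentral F Q' → Module.finrank F Q' = 4 → Nonempty (Q' ≃ₐ[F] Q))
    (q : (Fin 5 → F) → F) (hq : IsQuadFormField 5 q)
    (q₁ : (Fin 4 → F) → F) (q₂ : (Fin 1 → F) → F)
    (hq₁ : IsQuadFormField 4 q₁) (hq₁ns : QFieldNonsingular 4 q₁)
    (hq₂ : IsQuadFormField 1 q₂) (hq₂ts : QFieldTotallySingular 1 q₂)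
    (f : (Fin 5 → F) ≃ₗ[F] (Fin 4 → F) × (Fin 1 → F))
    (hdecomp : ∀ x : Fin 5 → F, q x = q₁ (f x).1 + q₂ (f x).2) :
    ∃ x : Fin 5 → F, x ≠ 0 ∧ q x = 0 :=
  stmt15_general Q huniq q q₁ q₂ hq₁ hq₁ns hq₂ f hdecomp

end GenQuadForm
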